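/- Fix y ∈ (0,1) and σ² > 0. For every μ ∈ (0,1), the map μ ↦ ℓ(μ,σ²;y) is differentiable at μ with derivative (1/σ²) · u(y,μ) · (y−μ), where u(y,μ) = (1/(μ(1−μ)))·(d(y;μ) + 1/(μ²(1−μ)²)). -/

import Mathlib

open Real

/-- The unit deviance of the simplex distribution. -/
noncomputable def simplexDev (y μ : ℝ) : ℝ :=
  (y - μ)^2 / (y * (1 - y) * μ^2 * (1 - μ)^2)

/-- The simplex log-likelihood for a single observation. -/
noncomputable def simplexLoglik (μ σ2 y : ℝ) : ℝ :=
  -(1/2) * Real.log (2 * Real.pi) - (1/2) * Real.log σ2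
    - (3/2) * Real.log (y * (1 - y)) - simplexDev y μ / (2 * σ2)

/-- The quantity u(y,μ). -/
noncomputable def simplexU (y μ : ℝ) : ℝ :=
  (1 / (μ * (1 - μ))) * (simplexDev y μ + 1 / (μ^2 * (1 - μ)^2))

/- The quotient rule gives the numerator `μ(1-μ) + (y-μ)(1-2μ)` after factoring out
`-2(y-μ)`, and this equals `y(1-y) + (y-μ)²`, which is what `simplexU` collects. -/
theorem hasDerivAt_simplexDev {y μ : ℝ} (hy₀ : y ≠ 0) (hy₁ : y ≠ 1) (hμ₀ : μ ≠ 0)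
    (hμ₁ : μ ≠ 1) : HasDerivAt (simplexDev y) (-2 * (y - μ) * simplexU y μ) μ := by
  have hy₁' : 1 - y ≠ 0 := sub_ne_zero.mpr hy₁.symm
  have hμ₁' : 1 - μ ≠ 0 := sub_ne_zero.mpr hμ₁.symm
  have hnum := ((hasDerivAt_id' μ).const_sub y).fun_pow 2
  have hden := (((hasDerivAt_id' μ).fun_pow 2).const_mul (y * (1 - y))).fun_mul
    (((hasDerivAt_id' μ).const_sub 1).fun_pow 2)
  refine (hnum.fun_div hden (by simp [*])).congr_deriv ?_
  simp only [simplexU, simplexDev]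
  field_simp
  ring

theorem simplexLoglik_hasDerivAt_mean_general (y σ2 : ℝ) (hy : y ∈ Set.Ioo (0:ℝ) 1)
    (μ : ℝ) (hμ : μ ∈ Set.Ioo (0:ℝ) 1) :
    HasDerivAt (fun m => simplexLoglik m σ2 y)
      ((1 / σ2) * simplexU y μ * (y - μ)) μ := by
  have hdev := hasDerivAt_simplexDev hy.1.ne' hy.2.ne hμ.1.ne' hμ.2.ne
  refine ((hdev.div_const (2 * σ2)).const_sub _).congr_deriv ?_
  ring

/-- The derivative of the log-likelihood with respect to μ is (1/σ²)·u(y,μ)·(y−μ). -/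
theorem simplexLoglik_hasDerivAt_mean (y σ2 : ℝ) (hy : y ∈ Set.Ioo (0:ℝ) 1)
    (hσ2 : 0 < σ2) (μ : ℝ) (hμ : μ ∈ Set.Ioo (0:ℝ) 1) :
    HasDerivAt (fun m => simplexLoglik m σ2 y)
      ((1 / σ2) * simplexU y μ * (y - μ)) μ :=
  simplexLoglik_hasDerivAt_mean_general y σ2 hy μ hμ
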